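/- Let (Y_n) be the modified Galton–Watson process with pgfs g_n(x) = ((n-(n-1)x)/(n+1-nx))^2 started from the critical geometric offspring law. Then for all i, j ≥ 1, E(Y_i | Y_j = 0) ≤ 2 and E(Y_i | Y_j > 0) ≤ 4i + 4. -/

import Mathlib

open MeasureTheory ProbabilityTheory
open scoped ENNReal

/-- First-generation law of the modified Galton–Watson process:
`P(Y_1 = i) = (i+1) 2^{-i-2}` (the size-biased-minus-one critical geometric law). -/
noncomputable def gwFirstLaw (i : ℕ) : ℝ≥0∞ := (i + 1) * (2 : ℝ≥0∞)⁻¹ ^ (i + 2)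

/-- Transition probabilities of the Galton–Watson chain with critical geometric
offspring law `π_i = 2^{-i-1}`: from `k` individuals, the next generation is the sum of
`k` i.i.d. geometric variables, giving a negative binomial law
`p(k, m) = C(m+k-1, m) 2^{-(m+k)}`. -/
noncomputable def gwStep (k m : ℕ) : ℝ≥0∞ :=
  (Nat.choose (m + k - 1) m) * (2 : ℝ≥0∞)⁻¹ ^ (m + k)

/-!
The offspring pgf `f x = (2 - x)⁻¹` is a Möbius map with `f^[t] 0 = t / (t + 1)`, and the
first-generation pgf is `f'(x) = f x ^ 2`, so the process branches as if started from two
individuals. The Markov property turns expectations of `x ^ Y_n` into iterates of `f`: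
`E[x ^ Y_n] = (f^[n] x) ^ 2`, `E[v(Y_i) x ^ Y_(i+s)] = E[v(Y_i) (f^[s] x) ^ Y_i]`, and,
differentiating the pgf, `E[Y_(n+1) x ^ Y_(n+1)] = x f(x) E[Y_n f(x) ^ Y_n]`, while `E Y_n = 2`.
At `x = 0` these give `P(Y_j = 0) = (j / (j + 1)) ^ 2` and, with `t = j - i`,
`E(Y_i; Y_j = 0) = 2 t (t + 1) j / (j + 1) ^ 3` (zero for `j ≤ i`: extinction is absorbing).
Both bounds are then polynomial inequalities in `i` and `j`.
-/

-- `Summable.tsum_mul_tsum_eq_tsum_sum_range` needs continuous multiplication, which `ℝ≥0∞` lacks.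
theorem ENNReal.tsum_mul_tsum_eq_tsum_sum_range (f g : ℕ → ℝ≥0∞) :
    (∑' n, f n) * ∑' n, g n = ∑' n, ∑ i ∈ Finset.range (n + 1), f i * g (n - i) := by
  simp_rw [← ENNReal.tsum_mul_right, ← ENNReal.tsum_mul_left,
    ← Finset.Nat.sum_antidiagonal_eq_sum_range_succ (fun i j => f i * g j)]
  rw [← ENNReal.tsum_prod, ← Finset.HasAntidiagonal.sigmaAntidiagonalEquivProd.tsum_eq,
    ENNReal.tsum_sigma']
  simp [Finset.HasAntidiagonal.sigmaAntidiagonalEquivProd,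
    Finset.sum_attach _ fun ij : ℕ × ℕ => f ij.1 * g ij.2]

theorem ENNReal.tsum_choose_mul_pow (k : ℕ) (r : ℝ≥0∞) :
    ∑' n, ((n + k).choose k : ℝ≥0∞) * r ^ n = (1 - r)⁻¹ ^ (k + 1) := by
  induction k with
  | zero => simp [ENNReal.tsum_geometric]
  | succ k ih =>
    rw [pow_succ, ← ih, ← ENNReal.tsum_geometric, ENNReal.tsum_mul_tsum_eq_tsum_sum_range]
    refine tsum_congr fun n => ?_
    have hpow : ∀ i ∈ Finset.range (n + 1), ((i + k).choose k : ℝ≥0∞) * r ^ i * r ^ (n - i)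
        = ((i + k).choose k : ℝ≥0∞) * r ^ n := fun i hi => by
      rw [mul_assoc, ← pow_add, Nat.add_sub_cancel' (Finset.mem_range_succ_iff.mp hi)]
    rw [Finset.sum_congr rfl hpow, ← Finset.sum_mul, ← Nat.cast_sum, Nat.sum_range_add_choose,
      add_assoc]

noncomputable def gwPgf (x : ℝ≥0∞) : ℝ≥0∞ := (2 - x)⁻¹

lemma gwStep_zero_left (m : ℕ) : gwStep 0 m = if m = 0 then 1 else 0 := by
  rcases m with _ | m <;> simp [gwStep]

lemma gwStep_succ_left (k m : ℕ) :
    gwStep (k + 1) m = 2⁻¹ ^ (k + 1) * (((m + k).choose k : ℝ≥0∞) * 2⁻¹ ^ m) := by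
  rw [gwStep, show m + (k + 1) - 1 = m + k by omega, Nat.choose_symm_add, pow_add]
  ring

lemma inv_two_mul_inv_one_sub_half (x : ℝ≥0∞) : 2⁻¹ * (1 - 2⁻¹ * x)⁻¹ = gwPgf x := by
  rw [gwPgf, ← ENNReal.mul_inv (by simp) (by simp), ENNReal.mul_sub (by simp), mul_one,
    ← mul_assoc, ENNReal.mul_inv_cancel (by simp) (by simp), one_mul]

theorem tsum_gwStep_mul_pow (k : ℕ) (x : ℝ≥0∞) :
    ∑' m, gwStep k m * x ^ m = gwPgf x ^ k := by
  rcases k with _ | k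
  · simp [gwStep_zero_left]
  · simp_rw [gwStep_succ_left, mul_assoc, ENNReal.tsum_mul_left, ← mul_pow,
      ENNReal.tsum_choose_mul_pow, ← mul_pow, inv_two_mul_inv_one_sub_half]

lemma natCast_succ_mul_gwStep_succ (k m : ℕ) :
    ((m + 1 : ℕ) : ℝ≥0∞) * gwStep k (m + 1) = k * gwStep (k + 1) m := by
  have hchoose : (m + 1) * (m + k).choose (m + 1) = k * (m + k).choose m := by
    rw [mul_comm, Nat.choose_succ_right_eq, Nat.add_sub_cancel_left, mul_comm]
  simp only [gwStep, show m + (k + 1) - 1 = m + k by omega,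
    show m + 1 + k = m + (k + 1) by omega, ← mul_assoc]
  exact_mod_cast congrArg (fun n : ℕ => (n : ℝ≥0∞) * 2⁻¹ ^ (m + (k + 1))) hchoose

theorem tsum_gwStep_mul_natCast_mul_pow (k : ℕ) (x : ℝ≥0∞) :
    ∑' m, gwStep k m * (m * x ^ m) = k * x * gwPgf x ^ (k + 1) := by
  have hterm : ∀ m, gwStep k (m + 1) * (((m + 1 : ℕ) : ℝ≥0∞) * x ^ (m + 1))
      = k * x * (gwStep (k + 1) m * x ^ m) := fun m => by
    rw [← mul_assoc, mul_comm (gwStep k _), natCast_succ_mul_gwStep_succ, pow_succ]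
    ring
  rw [tsum_eq_zero_add' ENNReal.summable, tsum_congr hterm, ENNReal.tsum_mul_left,
    tsum_gwStep_mul_pow]
  simp

lemma gwPgf_one : gwPgf 1 = 1 := by
  rw [gwPgf, ← one_add_one_eq_two, ENNReal.add_sub_cancel_right ENNReal.one_ne_top, inv_one]

theorem tsum_gwStep_mul_natCast (k : ℕ) : ∑' m, gwStep k m * m = k := by
  simpa [gwPgf_one] using tsum_gwStep_mul_natCast_mul_pow k 1

lemma gwFirstLaw_eq_gwStep_two (m : ℕ) : gwFirstLaw m = gwStep 2 m := by
  rw [gwFirstLaw, gwStep, show m + 2 - 1 = m + 1 by omega, Nat.choose_succ_self_right]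
  push_cast
  ring

lemma gwPgf_ofReal {a : ℝ} (ha : 0 ≤ a) (ha2 : a < 2) :
    gwPgf (ENNReal.ofReal a) = ENNReal.ofReal (2 - a)⁻¹ := by
  rw [gwPgf, ENNReal.ofReal_inv_of_pos (by linarith), ENNReal.ofReal_sub _ ha, ENNReal.ofReal_ofNat]

/-- `gwPgf^[t] 0`: the probability that a critical geometric Galton–Watson process started
from one individual is extinct by generation `t`. -/
noncomputable def extinctionProb (t : ℕ) : ℝ := t / (t + 1)

lemma extinctionProb_nonneg (t : ℕ) : 0 ≤ extinctionProb t := by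
  unfold extinctionProb; positivity

lemma extinctionProb_lt_one (t : ℕ) : extinctionProb t < 1 := by
  unfold extinctionProb; rw [div_lt_one (by positivity)]; linarith

lemma gwPgf_extinctionProb (t : ℕ) :
    gwPgf (ENNReal.ofReal (extinctionProb t)) = ENNReal.ofReal (extinctionProb (t + 1)) := by
  rw [gwPgf_ofReal (extinctionProb_nonneg t) (by linarith [extinctionProb_lt_one t])]
  unfold extinctionProb
  rw [show (2 : ℝ) - t / (t + 1) = (t + 2) / (t + 1) by field_simp; ring, inv_div]
  push_cast
  ring_nf

lemma iterate_gwPgf_extinctionProb (t n : ℕ) :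
    gwPgf^[n] (ENNReal.ofReal (extinctionProb t)) = ENNReal.ofReal (extinctionProb (t + n)) := by
  induction n with
  | zero => rfl
  | succ n ih => rw [Function.iterate_succ_apply', ih, gwPgf_extinctionProb, add_assoc]

lemma iterate_gwPgf_zero (n : ℕ) : gwPgf^[n] 0 = ENNReal.ofReal (extinctionProb n) := by
  simpa [extinctionProb] using iterate_gwPgf_extinctionProb 0 n

/-- `E(Y_i; Y_j = 0)`; the truncated `j - i` makes it vanish for `j ≤ i`. -/
noncomputable def meanOnExtinction (i j : ℕ) : ℝ :=
  2 * (j - i : ℕ) * ((j - i : ℕ) + 1) * j / (j + 1) ^ 3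

lemma meanOnExtinction_nonneg (i j : ℕ) : 0 ≤ meanOnExtinction i j := by
  unfold meanOnExtinction; positivity

lemma meanOnExtinction_le {i j : ℕ} (hi : 1 ≤ i) (hj : 1 ≤ j) :
    meanOnExtinction i j ≤ 2 * extinctionProb j ^ 2 := by
  have htj : ((j - i : ℕ) : ℝ) + 1 ≤ j := by exact_mod_cast (by omega : j - i + 1 ≤ j)
  rw [meanOnExtinction, extinctionProb, div_pow, div_le_iff₀ (by positivity)]
  field_simp
  nlinarith [mul_nonneg (Nat.cast_nonneg (j - i)) (Nat.cast_nonneg (α := ℝ) j)]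

lemma two_sub_meanOnExtinction_le {i j : ℕ} (hi : 1 ≤ i) (hj : 1 ≤ j) :
    2 - meanOnExtinction i j ≤ (4 * i + 4) * (1 - extinctionProb j ^ 2) := by
  have htj : ((j - i : ℕ) : ℝ) + 1 ≤ j := by exact_mod_cast (by omega : j - i + 1 ≤ j)
  have hjt : (j : ℝ) ≤ (j - i : ℕ) + i := by exact_mod_cast (by omega : j ≤ j - i + i)
  set t : ℝ := ((j - i : ℕ) : ℝ)
  have ht : 0 ≤ t := Nat.cast_nonneg _
  have hti : (j + 1) * (2 * j + 1) * (j - t) ≤ ((j : ℝ) + 1) * (2 * j + 1) * i :=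
    mul_le_mul_of_nonneg_left (by linarith) (by positivity)
  rw [meanOnExtinction, extinctionProb, div_pow, sub_le_iff_le_add]
  field_simp
  nlinarith [mul_nonneg ht (by linarith : (0 : ℝ) ≤ j),
    mul_nonneg (sub_nonneg.2 htj) (by linarith : (0 : ℝ) ≤ j),
    mul_nonneg (mul_nonneg (sub_nonneg.2 htj) (by linarith : (0 : ℝ) ≤ j))
      (by linarith : (0 : ℝ) ≤ j)]

lemma ProbabilityTheory.lintegral_cond_le {Ω : Type*} [MeasurableSpace Ω] {μ : Measure Ω}
    [IsFiniteMeasure μ] {s : Set Ω} (hs : μ s ≠ 0) {f : Ω → ℝ≥0∞} {c : ℝ≥0∞}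
    (h : ∫⁻ ω in s, f ω ∂μ ≤ c * μ s) : ∫⁻ ω, f ω ∂μ[|s] ≤ c := by
  rw [ProbabilityTheory.cond, lintegral_smul_measure, smul_eq_mul,
    ENNReal.inv_mul_le_iff hs (measure_ne_top μ s), mul_comm]
  exact h

lemma setLIntegral_eq_zero_eq_lintegral_mul_zero_pow {Ω : Type*} [MeasurableSpace Ω]
    {μ : Measure Ω} {Z : Ω → ℕ} (hZ : Measurable Z) (f : Ω → ℝ≥0∞) :
    ∫⁻ ω in {ω | Z ω = 0}, f ω ∂μ = ∫⁻ ω, f ω * 0 ^ Z ω ∂μ := by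
  have hs : MeasurableSet {ω | Z ω = 0} := hZ (measurableSet_singleton 0)
  rw [← lintegral_indicator hs]
  refine lintegral_congr fun ω => ?_
  by_cases h : Z ω = 0 <;> simp [h, Set.indicator]

section InitialPath

variable {Ω : Type*} [MeasurableSpace Ω] {μ : Measure Ω} {Y : ℕ → Ω → ℕ}

def initialPath (Y : ℕ → Ω → ℕ) (n : ℕ) (ω : Ω) : Fin n → ℕ := fun q => Y (q + 1) ω

lemma measurable_initialPath (hmeas : ∀ t, Measurable (Y t)) (n : ℕ) :
    Measurable (initialPath Y n) :=
  measurable_pi_lambda _ fun _ => hmeas _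

lemma lintegral_comp_initialPath (hmeas : ∀ t, Measurable (Y t)) (n : ℕ)
    (g : (Fin n → ℕ) → ℝ≥0∞) :
    ∫⁻ ω, g (initialPath Y n ω) ∂μ = ∑' v, g v * μ (initialPath Y n ⁻¹' {v}) := by
  rw [← lintegral_map (measurable_of_countable g) (measurable_initialPath hmeas n),
    lintegral_countable']
  simp_rw [Measure.map_apply (measurable_initialPath hmeas n) (measurableSet_singleton _)]

end InitialPath

structure IsModifiedGW {Ω : Type*} [MeasurableSpace Ω] (μ : Measure Ω) (Y : ℕ → Ω → ℕ) :
    Prop where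
  measurable : ∀ n, Measurable (Y n)
  measure_cylinder : ∀ n : ℕ, ∀ k : ℕ → ℕ,
    μ {ω | ∀ t ∈ Finset.Icc 1 (n + 1), Y t ω = k t} =
      gwFirstLaw (k 1) * ∏ t ∈ Finset.Icc 1 n, gwStep (k t) (k (t + 1))

namespace IsModifiedGW

variable {Ω : Type*} [MeasurableSpace Ω] {μ : Measure Ω} {Y : ℕ → Ω → ℕ}

lemma measure_initialPath_preimage (hY : IsModifiedGW μ Y) (n : ℕ) (v : Fin (n + 1) → ℕ) :
    μ (initialPath Y (n + 1) ⁻¹' {v}) =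
      gwFirstLaw (v 0) * ∏ q : Fin n, gwStep (v q.castSucc) (v q.succ) := by
  set k : ℕ → ℕ := fun t => if h : t - 1 < n + 1 then v ⟨t - 1, h⟩ else 0
  have hk_succ : ∀ q : Fin (n + 1), k (q + 1) = v q := fun q => dif_pos (by omega)
  have hset : initialPath Y (n + 1) ⁻¹' {v} =
      {ω | ∀ t ∈ Finset.Icc 1 (n + 1), Y t ω = k t} := by
    ext ω
    simp only [Set.mem_preimage, Set.mem_singleton_iff, funext_iff, initialPath,
      Finset.mem_Icc, Set.mem_ofPred_eq]
    constructor
    · rintro h t ⟨ht1, ht2⟩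
      obtain ⟨q, rfl⟩ : ∃ q : Fin (n + 1), t = q + 1 := ⟨⟨t - 1, by omega⟩, by simp; omega⟩
      rw [h, hk_succ]
    · intro h q
      rw [h _ ⟨by omega, by omega⟩, hk_succ]
  rw [hset, hY.measure_cylinder, ← Finset.Ico_add_one_right_eq_Icc,
    Finset.prod_Ico_eq_prod_range, Nat.add_sub_cancel, ← Fin.prod_univ_eq_prod_range]
  congr 1
  refine Finset.prod_congr rfl fun q _ => ?_
  rw [add_comm 1, ← hk_succ q.castSucc, ← hk_succ q.succ]
  rfl

lemma measure_initialPath_preimage_snoc (hY : IsModifiedGW μ Y) (n : ℕ) (u : Fin (n + 1) → ℕ)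
    (m : ℕ) :
    μ (initialPath Y (n + 2) ⁻¹' {(Fin.snoc u m : Fin (n + 2) → ℕ)}) =
      μ (initialPath Y (n + 1) ⁻¹' {u}) * gwStep (u (Fin.last n)) m := by
  rw [measure_initialPath_preimage hY, measure_initialPath_preimage hY, Fin.prod_univ_castSucc]
  simp only [Fin.snoc_castSucc, Fin.succ_last, Fin.snoc_last, ← Fin.castSucc_zero,
    Fin.succ_castSucc]
  ring

theorem lintegral_comp_one (hY : IsModifiedGW μ Y) (h : ℕ → ℝ≥0∞) :
    ∫⁻ ω, h (Y 1 ω) ∂μ = ∑' m, gwStep 2 m * h m := by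
  refine (lintegral_comp_initialPath hY.measurable 1 (fun u => h (u 0))).trans ?_
  rw [← (Equiv.funUnique (Fin 1) ℕ).symm.tsum_eq]
  refine tsum_congr fun m => ?_
  rw [measure_initialPath_preimage hY 0]
  simp [gwFirstLaw_eq_gwStep_two, mul_comm]

theorem lintegral_mul_comp_succ (hY : IsModifiedGW μ Y) (n : ℕ)
    (G : (Fin (n + 1) → ℕ) → ℝ≥0∞) (w : ℕ → ℝ≥0∞) :
    ∫⁻ ω, G (initialPath Y (n + 1) ω) * w (Y (n + 2) ω) ∂μ =
      ∫⁻ ω, G (initialPath Y (n + 1) ω) * ∑' m, gwStep (Y (n + 1) ω) m * w m ∂μ := by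
  refine (lintegral_comp_initialPath hY.measurable (n + 2)
    (fun x => G (Fin.init x) * w (x (Fin.last _)))).trans (Eq.trans ?_
      (lintegral_comp_initialPath hY.measurable (n + 1)
        (fun u => G u * ∑' m, gwStep (u (Fin.last n)) m * w m)).symm)
  rw [← (Fin.snocEquiv fun _ => ℕ).tsum_eq, ENNReal.tsum_prod', ENNReal.tsum_comm]
  refine tsum_congr fun u => ?_
  simp only [Fin.snocEquiv, Equiv.coe_fn_mk, Fin.init_snoc, Fin.snoc_last,
    measure_initialPath_preimage_snoc hY, ← ENNReal.tsum_mul_left, ← ENNReal.tsum_mul_right]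
  exact tsum_congr fun m => by ring

theorem lintegral_comp_mul_comp_succ (hY : IsModifiedGW μ Y) {i n : ℕ} (hi : 1 ≤ i)
    (hin : i ≤ n) (v w : ℕ → ℝ≥0∞) :
    ∫⁻ ω, v (Y i ω) * w (Y (n + 1) ω) ∂μ =
      ∫⁻ ω, v (Y i ω) * ∑' m, gwStep (Y n ω) m * w m ∂μ := by
  obtain ⟨i, rfl⟩ := Nat.exists_eq_add_of_le' hi
  obtain ⟨n, rfl⟩ := Nat.exists_eq_add_of_le' (hi.trans hin)
  exact lintegral_mul_comp_succ hY n (fun u => v (u ⟨i, by omega⟩)) w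

theorem lintegral_comp_succ (hY : IsModifiedGW μ Y) {n : ℕ} (hn : 1 ≤ n) (w : ℕ → ℝ≥0∞) :
    ∫⁻ ω, w (Y (n + 1) ω) ∂μ = ∫⁻ ω, ∑' m, gwStep (Y n ω) m * w m ∂μ := by
  simpa using lintegral_comp_mul_comp_succ hY hn le_rfl (fun _ => 1) w

theorem lintegral_pow (hY : IsModifiedGW μ Y) {n : ℕ} (hn : 1 ≤ n) (x : ℝ≥0∞) :
    ∫⁻ ω, x ^ Y n ω ∂μ = (gwPgf^[n] x) ^ 2 := by
  induction n, hn using Nat.le_induction generalizing x with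
  | base => simp [lintegral_comp_one hY (x ^ ·), tsum_gwStep_mul_pow]
  | succ n hn ih =>
    simp_rw [lintegral_comp_succ hY hn (x ^ ·), tsum_gwStep_mul_pow, ih,
      Function.iterate_succ_apply]

theorem lintegral_mul_pow_comp_add (hY : IsModifiedGW μ Y) {i : ℕ} (hi : 1 ≤ i)
    (v : ℕ → ℝ≥0∞) (s : ℕ) (x : ℝ≥0∞) :
    ∫⁻ ω, v (Y i ω) * x ^ Y (i + s) ω ∂μ = ∫⁻ ω, v (Y i ω) * (gwPgf^[s] x) ^ Y i ω ∂μ := by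
  induction s generalizing x with
  | zero => rfl
  | succ s ih =>
    rw [← add_assoc, lintegral_comp_mul_comp_succ hY hi (Nat.le_add_right i s) v (x ^ ·)]
    simp_rw [tsum_gwStep_mul_pow, ih, Function.iterate_succ_apply]

theorem lintegral_mul_comp_add (hY : IsModifiedGW μ Y) {i : ℕ} (hi : 1 ≤ i)
    (v : ℕ → ℝ≥0∞) (s : ℕ) :
    ∫⁻ ω, v (Y i ω) * Y (i + s) ω ∂μ = ∫⁻ ω, v (Y i ω) * Y i ω ∂μ := by
  induction s with
  | zero => rfl
  | succ s ih =>
    rw [← add_assoc, lintegral_comp_mul_comp_succ hY hi (Nat.le_add_right i s) v (↑·)]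
    simp_rw [tsum_gwStep_mul_natCast, ih]

theorem lintegral_natCast (hY : IsModifiedGW μ Y) {n : ℕ} (hn : 1 ≤ n) :
    ∫⁻ ω, (Y n ω : ℝ≥0∞) ∂μ = 2 := by
  obtain ⟨s, rfl⟩ := Nat.exists_eq_add_of_le hn
  simpa [lintegral_comp_one hY (↑·), tsum_gwStep_mul_natCast]
    using lintegral_mul_comp_add hY le_rfl (fun _ => 1) s

theorem lintegral_natCast_mul_pow_one (hY : IsModifiedGW μ Y) (x : ℝ≥0∞) :
    ∫⁻ ω, Y 1 ω * x ^ Y 1 ω ∂μ = 2 * x * gwPgf x ^ 3 := by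
  simp [lintegral_comp_one hY (fun m => m * x ^ m), tsum_gwStep_mul_natCast_mul_pow]

theorem lintegral_natCast_mul_pow_succ (hY : IsModifiedGW μ Y) {n : ℕ} (hn : 1 ≤ n)
    (x : ℝ≥0∞) :
    ∫⁻ ω, Y (n + 1) ω * x ^ Y (n + 1) ω ∂μ =
      x * gwPgf x * ∫⁻ ω, Y n ω * gwPgf x ^ Y n ω ∂μ := by
  have hmeas : Measurable fun ω => (Y n ω : ℝ≥0∞) * gwPgf x ^ Y n ω :=
    (measurable_of_countable fun m : ℕ => (m : ℝ≥0∞) * gwPgf x ^ m).comp (hY.measurable n)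
  rw [lintegral_comp_succ hY hn (fun m => m * x ^ m), ← lintegral_const_mul _ hmeas]
  simp_rw [tsum_gwStep_mul_natCast_mul_pow, pow_succ]
  exact lintegral_congr fun ω => by ring

theorem lintegral_natCast_mul_extinctionProb_pow (hY : IsModifiedGW μ Y) {n : ℕ} (hn : 1 ≤ n)
    (t : ℕ) :
    ∫⁻ ω, Y n ω * ENNReal.ofReal (extinctionProb t) ^ Y n ω ∂μ =
      ENNReal.ofReal (2 * t * (t + 1) * (t + n) / (t + n + 1) ^ 3) := by
  have ht : (t : ℝ) + 1 ≠ 0 := by positivity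
  have ht' : (t : ℝ) + 2 ≠ 0 := by positivity
  induction n, hn using Nat.le_induction generalizing t with
  | base =>
    rw [lintegral_natCast_mul_pow_one hY, gwPgf_extinctionProb, ← ENNReal.ofReal_pow
      (extinctionProb_nonneg _), ← ENNReal.ofReal_ofNat 2, ← ENNReal.ofReal_mul (by norm_num),
      ← ENNReal.ofReal_mul (by positivity [extinctionProb_nonneg t])]
    unfold extinctionProb
    congr 1
    push_cast
    field_simp
  | succ n hn ih =>
    rw [lintegral_natCast_mul_pow_succ hY hn, gwPgf_extinctionProb, ih (t + 1) (by positivity)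
      (by positivity), ← ENNReal.ofReal_mul (extinctionProb_nonneg _),
      ← ENNReal.ofReal_mul
        (by positivity [extinctionProb_nonneg t, extinctionProb_nonneg (t + 1)])]
    unfold extinctionProb
    congr 1
    push_cast
    field_simp
    ring

lemma measurableSet_extinct (hY : IsModifiedGW μ Y) (j : ℕ) : MeasurableSet {ω | Y j ω = 0} :=
  hY.measurable j (measurableSet_singleton 0)

theorem measure_extinct (hY : IsModifiedGW μ Y) {j : ℕ} (hj : 1 ≤ j) :
    μ {ω | Y j ω = 0} = ENNReal.ofReal (extinctionProb j ^ 2) := by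
  rw [← setLIntegral_one, setLIntegral_eq_zero_eq_lintegral_mul_zero_pow (hY.measurable j)]
  simp_rw [one_mul]
  rw [lintegral_pow hY hj, iterate_gwPgf_zero, ENNReal.ofReal_pow (extinctionProb_nonneg j)]

theorem measure_extinct_compl [IsProbabilityMeasure μ] (hY : IsModifiedGW μ Y) {j : ℕ}
    (hj : 1 ≤ j) :
    μ {ω | Y j ω = 0}ᶜ = ENNReal.ofReal (1 - extinctionProb j ^ 2) := by
  rw [prob_compl_eq_one_sub (hY.measurableSet_extinct j), measure_extinct hY hj,
    ← ENNReal.ofReal_one, ← ENNReal.ofReal_sub _ (by positivity [extinctionProb_nonneg j])]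

theorem setLIntegral_extinct (hY : IsModifiedGW μ Y) {i j : ℕ} (hi : 1 ≤ i) (hj : 1 ≤ j) :
    ∫⁻ ω in {ω | Y j ω = 0}, (Y i ω : ℝ≥0∞) ∂μ = ENNReal.ofReal (meanOnExtinction i j) := by
  rw [setLIntegral_eq_zero_eq_lintegral_mul_zero_pow (hY.measurable j)]
  rcases le_total i j with hij | hji
  · obtain ⟨s, rfl⟩ := Nat.exists_eq_add_of_le hij
    rw [lintegral_mul_pow_comp_add hY hi (↑·) s 0, iterate_gwPgf_zero,
      lintegral_natCast_mul_extinctionProb_pow hY hi s, meanOnExtinction, Nat.add_sub_cancel_left]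
    push_cast
    ring_nf
  · obtain ⟨s, rfl⟩ := Nat.exists_eq_add_of_le hji
    simp_rw [mul_comm (Y (j + s) _ : ℝ≥0∞)]
    rw [lintegral_mul_comp_add hY hj (0 ^ ·) s]
    have hzero : ∀ m : ℕ, (0 : ℝ≥0∞) ^ m * m = 0 := fun m => by rcases m with _ | m <;> simp
    simp [meanOnExtinction, hzero]

theorem setLIntegral_extinct_compl (hY : IsModifiedGW μ Y) {i j : ℕ} (hi : 1 ≤ i) (hj : 1 ≤ j) :
    ∫⁻ ω in {ω | Y j ω = 0}ᶜ, (Y i ω : ℝ≥0∞) ∂μ =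
      ENNReal.ofReal (2 - meanOnExtinction i j) := by
  have hsplit :=
    lintegral_add_compl (μ := μ) (fun ω => (Y i ω : ℝ≥0∞)) (hY.measurableSet_extinct j)
  rw [setLIntegral_extinct hY hi hj, lintegral_natCast hY hi] at hsplit
  rw [ENNReal.ofReal_sub _ (meanOnExtinction_nonneg i j), ENNReal.ofReal_ofNat, ← hsplit,
    ENNReal.add_sub_cancel_left ENNReal.ofReal_ne_top]

end IsModifiedGW

theorem conditional_mean_modified_GW_general
    {Ω : Type*} [MeasurableSpace Ω] (μ : Measure Ω) [IsProbabilityMeasure μ]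
    (Y : ℕ → Ω → ℕ)
    (hmeas : ∀ n, Measurable (Y n))
    (hjoint : ∀ n : ℕ, ∀ k : ℕ → ℕ,
      μ {ω | ∀ t ∈ Finset.Icc 1 (n + 1), Y t ω = k t} =
        gwFirstLaw (k 1) * ∏ t ∈ Finset.Icc 1 n, gwStep (k t) (k (t + 1)))
    (i j : ℕ) (hi : 1 ≤ i) (hj : 1 ≤ j) :
    (∫⁻ ω, (Y i ω : ℝ≥0∞) ∂(μ[|{ω | Y j ω = 0}])) ≤ 2 ∧
    (∫⁻ ω, (Y i ω : ℝ≥0∞) ∂(μ[|{ω | 0 < Y j ω}])) ≤ 4 * i + 4 := by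
  have hY : IsModifiedGW μ Y := ⟨hmeas, hjoint⟩
  have hp : 0 < extinctionProb j := div_pos (by exact_mod_cast hj) (by positivity)
  have hp1 : extinctionProb j < 1 := extinctionProb_lt_one j
  have hpos : {ω | 0 < Y j ω} = {ω | Y j ω = 0}ᶜ := by ext; simp [Nat.pos_iff_ne_zero]
  constructor
  · refine lintegral_cond_le (by rw [hY.measure_extinct hj]; positivity) ?_
    rw [hY.setLIntegral_extinct hi hj, hY.measure_extinct hj, ← ENNReal.ofReal_ofNat 2,
      ← ENNReal.ofReal_mul zero_le_two]
    exact ENNReal.ofReal_le_ofReal (meanOnExtinction_le hi hj)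
  · rw [hpos]
    refine lintegral_cond_le (by
      rw [hY.measure_extinct_compl hj]; exact (ENNReal.ofReal_pos.2 (by nlinarith)).ne') ?_
    rw [hY.setLIntegral_extinct_compl hi hj, hY.measure_extinct_compl hj,
      show (4 * i + 4 : ℝ≥0∞) = ENNReal.ofReal (4 * i + 4) by norm_cast,
      ← ENNReal.ofReal_mul (by positivity)]
    exact ENNReal.ofReal_le_ofReal (two_sub_meanOnExtinction_le hi hj)

/-- Let `(Y_n)` be the modified Galton–Watson process with `Y_0 = 1`, first-generation
law `P(Y_1 = i) = (i+1) 2^{-i-2}` and subsequent generations branching with the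
critical geometric offspring law `π_i = 2^{-i-1}` (encoded by the finite-dimensional
distributions below).  Then for all `i, j ≥ 1`,
`E(Y_i | Y_j = 0) ≤ 2` and `E(Y_i | Y_j > 0) ≤ 4i + 4`. -/
theorem conditional_mean_modified_GW
    {Ω : Type*} [MeasurableSpace Ω] (μ : Measure Ω) [IsProbabilityMeasure μ]
    (Y : ℕ → Ω → ℕ)
    (hmeas : ∀ n, Measurable (Y n))
    (hY0 : ∀ ω, Y 0 ω = 1)
    (hjoint : ∀ n : ℕ, ∀ k : ℕ → ℕ,
      μ {ω | ∀ t ∈ Finset.Icc 1 (n + 1), Y t ω = k t} =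
        gwFirstLaw (k 1) * ∏ t ∈ Finset.Icc 1 n, gwStep (k t) (k (t + 1)))
    (i j : ℕ) (hi : 1 ≤ i) (hj : 1 ≤ j) :
    (∫⁻ ω, (Y i ω : ℝ≥0∞) ∂(μ[|{ω | Y j ω = 0}])) ≤ 2 ∧
    (∫⁻ ω, (Y i ω : ℝ≥0∞) ∂(μ[|{ω | 0 < Y j ω}])) ≤ 4 * i + 4 :=
  conditional_mean_modified_GW_general μ Y hmeas hjoint i j hi hj
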